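/- arXiv:math/0408432 — 3 statements merged into one kernel-verified Lean document; each statement's English description precedes it below -/
import Mathlib

section
/- Let K be a subgroup of G and g ∈ G an element with g·K·g⁻¹ = K. Then: (a) if W′ and W″ are K-submodules of V that are K-isomorphic, then π(g)(W′) and π(g)(W″) are again K-submodules of V and are K-isomorphic; (b) consequently, for every simple representation (d, W) of K, the image π(g)(V_d) of the d-isotypic component of V is again an isotypic component of V, namely the isotypic component of the twisted type; in particular π(g) permutes the isotypic components of V. (This is part 1 of the paper's Clifford-theory Theorem in the appendix.) -/
variable {𝕜 : Type*} [Field 𝕜] {G : Type*} [Group G]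
  {V : Type*} [AddCommGroup V] [Module 𝕜 V]

/-- `W` is a `K`-submodule of `V` (for the representation `π` of `G` on `V`). -/
def IsSubrep (π : G →* (V ≃ₗ[𝕜] V)) (K : Subgroup G) (W : Submodule 𝕜 V) : Prop :=
  ∀ c ∈ K, ∀ x ∈ W, π c x ∈ W

/-- Two submodules of `V` are `K`-isomorphic: there is a `𝕜`-linear isomorphism between
them intertwining the `K`-actions. -/
def SubrepIso (π : G →* (V ≃ₗ[𝕜] V)) (K : Subgroup G) (W₁ W₂ : Submodule 𝕜 V) : Prop :=
  ∃ e : W₁ ≃ₗ[𝕜] W₂, ∀ c ∈ K, ∀ (x : W₁) (hx : π c (x : V) ∈ W₁),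
    (e ⟨π c (x : V), hx⟩ : V) = π c ((e x : V))

/-- A submodule `W'` of `V` is `K`-isomorphic to the abstract representation `(d, Wd)`
of `K`. -/
def IsoToRep (π : G →* (V ≃ₗ[𝕜] V)) (K : Subgroup G) (W' : Submodule 𝕜 V)
    {Wd : Type*} [AddCommGroup Wd] [Module 𝕜 Wd] (d : K →* (Wd ≃ₗ[𝕜] Wd)) : Prop :=
  ∃ e : W' ≃ₗ[𝕜] Wd, ∀ (c : K) (x : W') (hx : π (c : G) (x : V) ∈ W'),
    e ⟨π (c : G) (x : V), hx⟩ = d c (e x)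

/-- The `d`-isotypic component of `V`: the sum of all `K`-submodules of `V` that are
`K`-isomorphic to the representation `(d, Wd)`. -/
def IsotypicComponent (π : G →* (V ≃ₗ[𝕜] V)) (K : Subgroup G)
    {Wd : Type*} [AddCommGroup Wd] [Module 𝕜 Wd] (d : K →* (Wd ≃ₗ[𝕜] Wd)) :
    Submodule 𝕜 V :=
  sSup {W' : Submodule 𝕜 V | IsSubrep π K W' ∧ IsoToRep π K W' d}

/-- The abstract representation `(d, Wd)` of `K` is simple. -/
def IsSimpleRep {G : Type*} [Group G] {K : Subgroup G}
    {Wd : Type*} [AddCommGroup Wd] [Module 𝕜 Wd] (d : K →* (Wd ≃ₗ[𝕜] Wd)) : Prop :=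
  (⊤ : Submodule 𝕜 Wd) ≠ ⊥ ∧
    ∀ U : Submodule 𝕜 Wd, (∀ (c : K), ∀ x ∈ U, d c x ∈ U) → U = ⊥ ∨ U = ⊤

/-- Conjugation `c ↦ g⁻¹ c g` as a map `K → K`, for `g` normalizing `K`. -/
def conjElem {G : Type*} [Group G] (K : Subgroup G) (g : G)
    (hg : ∀ x : G, g * x * g⁻¹ ∈ K ↔ x ∈ K) (c : K) : K :=
  ⟨g⁻¹ * (c : G) * g, (hg _).mp (by
    have h : g * (g⁻¹ * (c : G) * g) * g⁻¹ = (c : G) := by group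
    rw [h]; exact c.2)⟩

/-- The `g`-twist `ᵍd` of a representation `d` of `K`, given by `ᵍd(c) = d(g⁻¹ c g)`. -/
def twistRep {G : Type*} [Group G] {K : Subgroup G} (g : G)
    (hg : ∀ x : G, g * x * g⁻¹ ∈ K ↔ x ∈ K)
    {Wd : Type*} [AddCommGroup Wd] [Module 𝕜 Wd] (d : K →* (Wd ≃ₗ[𝕜] Wd)) :
    K →* (Wd ≃ₗ[𝕜] Wd) where
  toFun c := d (conjElem K g hg c)
  map_one' := by
    have h : conjElem K g hg 1 = 1 := by
      apply Subtype.ext; simp [conjElem]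
    show d (conjElem K g hg 1) = 1
    rw [h, map_one]
  map_mul' c₁ c₂ := by
    have h : conjElem K g hg (c₁ * c₂) = conjElem K g hg c₁ * conjElem K g hg c₂ := by
      apply Subtype.ext; simp only [conjElem, Subgroup.coe_mul, MulMemClass.mk_mul_mk]
      group
    show d (conjElem K g hg (c₁ * c₂)) = d (conjElem K g hg c₁) * d (conjElem K g hg c₂)
    rw [h, map_mul]

lemma pi_mul_apply (π : G →* (V ≃ₗ[𝕜] V)) (a b : G) (x : V) :
    π (a * b) x = π a (π b x) := by
  rw [map_mul]; rfl

lemma pi_symm_apply (π : G →* (V ≃ₗ[𝕜] V)) (g : G) (v : V) :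
    (π g).symm v = π g⁻¹ v := by
  rw [LinearEquiv.symm_apply_eq, ← pi_mul_apply]
  simp

lemma isSubrep_map (π : G →* (V ≃ₗ[𝕜] V)) (K : Subgroup G) (g : G)
    (hg : ∀ x : G, g * x * g⁻¹ ∈ K ↔ x ∈ K) {W : Submodule 𝕜 V}
    (hW : IsSubrep π K W) : IsSubrep π K (W.map (π g).toLinearMap) := by
  rintro c hc y ⟨x, hx, rfl⟩
  refine ⟨π ((conjElem K g hg ⟨c, hc⟩ : G)) x,
    hW _ (conjElem K g hg ⟨c, hc⟩).2 x hx, ?_⟩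
  show π g (π (g⁻¹ * c * g) x) = π c ((π g).toLinearMap x)
  show π g (π (g⁻¹ * c * g) x) = π c (π g x)
  rw [← pi_mul_apply, ← pi_mul_apply]
  congr 1
  group

lemma subrep_key (π : G →* (V ≃ₗ[𝕜] V)) (K : Subgroup G) (g : G)
    (hg : ∀ x : G, g * x * g⁻¹ ∈ K ↔ x ∈ K) {W : Submodule 𝕜 V}
    (hW : IsSubrep π K W) (c : K) (y : ↥(W.map (π g).toLinearMap))
    (hy : π (c : G) (y : V) ∈ W.map (π g).toLinearMap) :
    ∃ hmem : π ((conjElem K g hg c : G)) ((((π g).submoduleMap W).symm y : W) : V) ∈ W,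
      ((π g).submoduleMap W).symm ⟨π (c : G) (y : V), hy⟩
        = ⟨π ((conjElem K g hg c : G)) ((((π g).submoduleMap W).symm y : W) : V), hmem⟩ := by
  set x₀ : W := ((π g).submoduleMap W).symm y with hx₀
  have hx₀v : (x₀ : V) = π g⁻¹ (y : V) := by
    rw [hx₀, LinearEquiv.submoduleMap_symm_apply, pi_symm_apply]
  have hmem : π ((conjElem K g hg c : G)) (x₀ : V) ∈ W :=
    hW _ (conjElem K g hg c).2 _ x₀.2
  refine ⟨hmem, ?_⟩
  apply Subtype.ext
  rw [LinearEquiv.submoduleMap_symm_apply]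
  show (π g).symm (π (c : G) (y : V)) = π (g⁻¹ * (c : G) * g) (x₀ : V)
  rw [pi_symm_apply, hx₀v, ← pi_mul_apply, ← pi_mul_apply]
  congr 1
  group

lemma subrepIso_map (π : G →* (V ≃ₗ[𝕜] V)) (K : Subgroup G) (g : G)
    (hg : ∀ x : G, g * x * g⁻¹ ∈ K ↔ x ∈ K) {W₁ W₂ : Submodule 𝕜 V}
    (hW₁ : IsSubrep π K W₁) (h : SubrepIso π K W₁ W₂) :
    SubrepIso π K (W₁.map (π g).toLinearMap) (W₂.map (π g).toLinearMap) := by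
  obtain ⟨e, he⟩ := h
  refine ⟨((π g).submoduleMap W₁).symm.trans (e.trans ((π g).submoduleMap W₂)), ?_⟩
  intro c hc y hy
  obtain ⟨hmem, hkey⟩ := subrep_key π K g hg hW₁ ⟨c, hc⟩ y hy
  set x₀ : W₁ := ((π g).submoduleMap W₁).symm y with hx₀
  show ((π g).submoduleMap W₂ (e (((π g).submoduleMap W₁).symm ⟨π c (y : V), hy⟩)) : V)
      = π c (((π g).submoduleMap W₂ (e x₀) : V))
  rw [hkey, LinearEquiv.submoduleMap_apply, LinearEquiv.submoduleMap_apply,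
    he _ (conjElem K g hg ⟨c, hc⟩).2 x₀ hmem]
  show π g (π (g⁻¹ * c * g) ((e x₀ : V))) = π c (π g ((e x₀ : V)))
  rw [← pi_mul_apply, ← pi_mul_apply]
  congr 1
  group

lemma isoToRep_map (π : G →* (V ≃ₗ[𝕜] V)) (K : Subgroup G) (g : G)
    (hg : ∀ x : G, g * x * g⁻¹ ∈ K ↔ x ∈ K) {W : Submodule 𝕜 V}
    {Wd : Type*} [AddCommGroup Wd] [Module 𝕜 Wd] {d : K →* (Wd ≃ₗ[𝕜] Wd)}
    (hW : IsSubrep π K W) (h : IsoToRep π K W d) :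
    IsoToRep π K (W.map (π g).toLinearMap) (twistRep g hg d) := by
  obtain ⟨e, he⟩ := h
  refine ⟨((π g).submoduleMap W).symm.trans e, ?_⟩
  intro c y hy
  obtain ⟨hmem, hkey⟩ := subrep_key π K g hg hW c y hy
  set x₀ : W := ((π g).submoduleMap W).symm y with hx₀
  show e (((π g).submoduleMap W).symm ⟨π (c : G) (y : V), hy⟩)
      = twistRep g hg d c (e x₀)
  rw [hkey, he (conjElem K g hg c) x₀ hmem]
  rfl


lemma hg_inv {G : Type*} [Group G] {K : Subgroup G} {g : G}
    (hg : ∀ x : G, g * x * g⁻¹ ∈ K ↔ x ∈ K)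
    (x : G) : g⁻¹ * x * g⁻¹⁻¹ ∈ K ↔ x ∈ K := by
  have h := hg (g⁻¹ * x * g)
  have h2 : g * (g⁻¹ * x * g) * g⁻¹ = x := by group
  rw [h2] at h
  rw [inv_inv]
  exact h.symm

lemma twist_twist {G : Type*} [Group G] {K : Subgroup G} (g : G)
    (hg : ∀ x : G, g * x * g⁻¹ ∈ K ↔ x ∈ K)
    {Wd : Type*} [AddCommGroup Wd] [Module 𝕜 Wd] (d : K →* (Wd ≃ₗ[𝕜] Wd)) :
    twistRep g⁻¹ (hg_inv hg) (twistRep g hg d) = d := by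
  apply MonoidHom.ext
  intro c
  show d (conjElem K g hg (conjElem K g⁻¹ (hg_inv hg) c)) = d c
  congr 1
  apply Subtype.ext
  show g⁻¹ * (g⁻¹⁻¹ * (c : G) * g⁻¹) * g = (c : G)
  group

lemma map_map_inv (π : G →* (V ≃ₗ[𝕜] V)) (g : G) (W : Submodule 𝕜 V) :
    (W.map (π g⁻¹).toLinearMap).map (π g).toLinearMap = W := by
  rw [← Submodule.map_comp]
  have h : (π g).toLinearMap.comp (π g⁻¹).toLinearMap = LinearMap.id := by
    ext v
    show π g (π g⁻¹ v) = v
    rw [← pi_mul_apply]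
    simp
  rw [h, Submodule.map_id]

/-- Clifford theory, part 1.  Let `g ∈ G` normalize `K`.
(a) If `W₁` and `W₂` are `K`-isomorphic `K`-submodules of `V`, then `π g W₁` and
`π g W₂` are again `K`-submodules of `V` and are `K`-isomorphic.
(b) For every simple representation `(d, Wd)` of `K`, the image `π g (V_d)` of the
`d`-isotypic component of `V` is again an isotypic component of `V`, namely the isotypic
component of the `g`-twist `ᵍd`; in particular `π g` permutes the isotypic components. -/
theorem clifford_part_one (π : G →* (V ≃ₗ[𝕜] V)) (K : Subgroup G) (g : G)
    (hg : ∀ x : G, g * x * g⁻¹ ∈ K ↔ x ∈ K)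
    {Wd : Type*} [AddCommGroup Wd] [Module 𝕜 Wd]
    (d : K →* (Wd ≃ₗ[𝕜] Wd)) (hd : IsSimpleRep d) :
    (∀ W₁ W₂ : Submodule 𝕜 V, IsSubrep π K W₁ → IsSubrep π K W₂ →
      SubrepIso π K W₁ W₂ →
        IsSubrep π K (W₁.map (π g).toLinearMap) ∧
        IsSubrep π K (W₂.map (π g).toLinearMap) ∧
        SubrepIso π K (W₁.map (π g).toLinearMap) (W₂.map (π g).toLinearMap)) ∧
    (IsotypicComponent π K d).map (π g).toLinearMap =
      IsotypicComponent π K (twistRep g hg d) := by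
  constructor
  · intro W₁ W₂ h₁ h₂ h₁₂
    exact ⟨isSubrep_map π K g hg h₁, isSubrep_map π K g hg h₂,
      subrepIso_map π K g hg h₁ h₁₂⟩
  · apply le_antisymm
    · rw [Submodule.map_le_iff_le_comap]
      apply sSup_le
      intro W hW
      rw [← Submodule.map_le_iff_le_comap]
      exact le_sSup ⟨isSubrep_map π K g hg hW.1, isoToRep_map π K g hg hW.1 hW.2⟩
    · apply sSup_le
      intro W hW
      have hWeq : W = (W.map (π g⁻¹).toLinearMap).map (π g).toLinearMap :=
        (map_map_inv π g W).symm
      rw [hWeq]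
      apply Submodule.map_mono
      apply le_sSup
      have h1 : IsSubrep π K (W.map (π g⁻¹).toLinearMap) :=
        isSubrep_map π K g⁻¹ (hg_inv hg) hW.1
      have h2 : IsoToRep π K (W.map (π g⁻¹).toLinearMap)
          (twistRep g⁻¹ (hg_inv hg) (twistRep g hg d)) :=
        isoToRep_map π K g⁻¹ (hg_inv hg) hW.1 hW.2
      rw [twist_twist g hg d] at h2
      exact ⟨h1, h2⟩
end

section
/- Let K be a subgroup of G and g ∈ G an element with g·K·g⁻¹ = K. Suppose V is semisimple as a K-module (V is a sum of simple K-submodules), let (d, W) be a simple representation of K whose isotypic component V_d in V is nonzero and finite-dimensional, and let E : V → V be the 𝕜-linear projection onto V_d along the sum of all the other isotypic components of V (this projection exists since V is a semisimple K-module and is the direct sum of its isotypic components). Define Θ_d(g) to be the trace of the endomorphism of V_d given by u ↦ E(π(g) u). If Θ_d(g) ≠ 0, then π(g)(V_d) = V_d and the g-twist ᵍd is K-isomorphic to d. (This is the first assertion of the paper's Proposition on partial traces: if Θ_d(g) ≠ 0 then g intertwines d with itself.) -/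
variable {𝕜 : Type*} [Field 𝕜] {G : Type*} [Group G]
  {V : Type*} [AddCommGroup V] [Module 𝕜 V]

/-- `RepEquiv d₁ d₂`: the two representations of `K` on `Wd` are isomorphic. -/
def RepEquiv {G : Type*} [Group G] {K : Subgroup G}
    {Wd : Type*} [AddCommGroup Wd] [Module 𝕜 Wd]
    (d₁ d₂ : K →* (Wd ≃ₗ[𝕜] Wd)) : Prop :=
  ∃ e : Wd ≃ₗ[𝕜] Wd, ∀ (c : K) (x : Wd), e (d₁ c x) = d₂ c (e x)

/-- `W` is a simple (irreducible) `K`-submodule of `V`. -/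
def IsSimpleSubrep (π : G →* (V ≃ₗ[𝕜] V)) (K : Subgroup G) (W : Submodule 𝕜 V) : Prop :=
  IsSubrep π K W ∧ W ≠ ⊥ ∧
    ∀ U : Submodule 𝕜 V, U ≤ W → IsSubrep π K U → U = ⊥ ∨ U = W

/-! `π g` carries each `K`-submodule isomorphic to `d` onto one isomorphic to the twist `ᵍd`,
so `π g (V_d) ≤ V_{ᵍd}`. If `ᵍd ≇ d`, then `V_{ᵍd}` is a sum of simple submodules not
isomorphic to `d`, all killed by `E`; thus `E ∘ π g` vanishes on `V_d` and `Θ_d(g) = 0`.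
Hence `ᵍd ≅ d`, so `π g (V_d) ≤ V_{ᵍd} ≤ V_d`, with equality since `V_d` is
finite-dimensional. -/

section Isotypic

variable {π : G →* (V ≃ₗ[𝕜] V)} {K : Subgroup G}
  {Wd : Type*} [AddCommGroup Wd] [Module 𝕜 Wd]

theorem conjElem_conj {g : G} (hg : ∀ x : G, g * x * g⁻¹ ∈ K ↔ x ∈ K) (c : K) :
    conjElem K g hg ⟨g * c * g⁻¹, (hg c).2 c.2⟩ = c :=
  Subtype.ext (by simp [conjElem, mul_assoc])

theorem map_apply_conj (π : G →* (V ≃ₗ[𝕜] V)) (g c : G) (v : V) :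
    π c (π g v) = π g (π (g⁻¹ * c * g) v) := by
  simp only [← LinearEquiv.mul_apply, ← map_mul, mul_assoc, mul_inv_cancel_left]

theorem IsoToRep.trans_repEquiv {W : Submodule 𝕜 V} {d₁ d₂ : K →* (Wd ≃ₗ[𝕜] Wd)}
    (h₁ : IsoToRep π K W d₁) (h₂ : RepEquiv d₁ d₂) : IsoToRep π K W d₂ := by
  obtain ⟨e, he⟩ := h₁
  obtain ⟨f, hf⟩ := h₂
  exact ⟨e.trans f, fun c x hx => by simp only [LinearEquiv.trans_apply, he c x hx, hf]⟩

theorem IsoToRep.repEquiv {W : Submodule 𝕜 V} {d₁ d₂ : K →* (Wd ≃ₗ[𝕜] Wd)}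
    (hW : IsSubrep π K W) (h₁ : IsoToRep π K W d₁) (h₂ : IsoToRep π K W d₂) :
    RepEquiv d₁ d₂ := by
  obtain ⟨e₁, he₁⟩ := h₁
  obtain ⟨e₂, he₂⟩ := h₂
  refine ⟨e₁.symm.trans e₂, fun c x => ?_⟩
  obtain ⟨w, rfl⟩ := e₁.surjective x
  have hw : π (c : G) (w : V) ∈ W := hW c c.2 w w.2
  simp only [LinearEquiv.trans_apply, LinearEquiv.symm_apply_apply, ← he₁ c w hw, he₂ c w hw]

theorem IsoToRep.ne_bot {W : Submodule 𝕜 V} {d : K →* (Wd ≃ₗ[𝕜] Wd)}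
    (hd : IsSimpleRep d) (h : IsoToRep π K W d) : W ≠ ⊥ := by
  rintro rfl
  obtain ⟨e, -⟩ := h
  have : Subsingleton Wd := e.symm.injective.subsingleton
  exact hd.1 (Subsingleton.elim _ _)

theorem IsoToRep.isSimpleSubrep {W : Submodule 𝕜 V} {d : K →* (Wd ≃ₗ[𝕜] Wd)}
    (hd : IsSimpleRep d) (hW : IsSubrep π K W) (h : IsoToRep π K W d) :
    IsSimpleSubrep π K W := by
  refine ⟨hW, h.ne_bot hd, fun U hUW hU => ?_⟩
  obtain ⟨e, he⟩ := h
  set U' := (U.comap W.subtype).map (e : W →ₗ[𝕜] Wd)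
  have hinv : ∀ c : K, ∀ y ∈ U', d c y ∈ U' := by
    rintro c _ ⟨x, hxU, rfl⟩
    exact ⟨⟨π c x, hW c c.2 x x.2⟩, hU c c.2 x hxU, he c x _⟩
  rcases hd.2 _ hinv with hbot | htop
  · left
    rw [Submodule.map_eq_bot_iff] at hbot
    rw [← inf_of_le_right hUW, ← Submodule.map_comap_subtype, hbot, Submodule.map_bot]
  · right
    rw [Submodule.map_eq_top_iff, Submodule.comap_subtype_eq_top] at htop
    exact le_antisymm hUW htop

theorem IsSimpleRep.twistRep {g : G} (hg : ∀ x : G, g * x * g⁻¹ ∈ K ↔ x ∈ K)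
    {d : K →* (Wd ≃ₗ[𝕜] Wd)} (hd : IsSimpleRep d) : IsSimpleRep (twistRep g hg d) := by
  refine ⟨hd.1, fun U hU => hd.2 U fun c x hx => ?_⟩
  simpa [_root_.twistRep, conjElem_conj] using hU ⟨g * c * g⁻¹, (hg c).2 c.2⟩ x hx

theorem IsSubrep.map {g : G} (hg : ∀ x : G, g * x * g⁻¹ ∈ K ↔ x ∈ K)
    {W : Submodule 𝕜 V} (hW : IsSubrep π K W) : IsSubrep π K (W.map (π g).toLinearMap) := by
  rintro c hc _ ⟨w, hw, rfl⟩
  exact ⟨_, hW _ (conjElem K g hg ⟨c, hc⟩).2 w hw, (map_apply_conj π g c w).symm⟩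

theorem IsoToRep.map {g : G} (hg : ∀ x : G, g * x * g⁻¹ ∈ K ↔ x ∈ K)
    {W : Submodule 𝕜 V} {d : K →* (Wd ≃ₗ[𝕜] Wd)} (hW : IsSubrep π K W)
    (h : IsoToRep π K W d) :
    IsoToRep π K (W.map (π g).toLinearMap) (twistRep g hg d) := by
  obtain ⟨e, he⟩ := h
  set φ := (π g).submoduleMap W
  refine ⟨φ.symm.trans e, fun c x hx => ?_⟩
  obtain ⟨y, rfl⟩ := φ.surjective x
  set c' := conjElem K g hg c
  have hy : π (c' : G) (y : V) ∈ W := hW c' c'.2 y y.2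
  have hφ : φ.symm ⟨π c (φ y), hx⟩ = ⟨π c' y, hy⟩ :=
    φ.symm_apply_eq.2 (Subtype.ext (map_apply_conj π g c y))
  simp only [LinearEquiv.trans_apply, hφ, φ.symm_apply_apply, he c' y hy]
  rfl

theorem map_isotypicComponent_le {g : G} (hg : ∀ x : G, g * x * g⁻¹ ∈ K ↔ x ∈ K)
    (d : K →* (Wd ≃ₗ[𝕜] Wd)) :
    (IsotypicComponent π K d).map (π g).toLinearMap ≤
      IsotypicComponent π K (twistRep g hg d) := by
  rw [Submodule.map_le_iff_le_comap]
  refine sSup_le fun W ⟨hW, hiso⟩ => Submodule.map_le_iff_le_comap.1 (le_sSup ?_)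
  exact ⟨hW.map hg, hiso.map hg hW⟩

theorem RepEquiv.isotypicComponent_le {d₁ d₂ : K →* (Wd ≃ₗ[𝕜] Wd)} (h : RepEquiv d₁ d₂) :
    IsotypicComponent π K d₁ ≤ IsotypicComponent π K d₂ :=
  sSup_le_sSup fun _ ⟨hW, hiso⟩ => ⟨hW, hiso.trans_repEquiv h⟩

theorem isotypicComponent_le_of_not_repEquiv {d₁ d₂ : K →* (Wd ≃ₗ[𝕜] Wd)}
    (hd₁ : IsSimpleRep d₁) (h : ¬ RepEquiv d₁ d₂) :
    IsotypicComponent π K d₁ ≤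
      sSup {W : Submodule 𝕜 V | IsSimpleSubrep π K W ∧ ¬ IsoToRep π K W d₂} :=
  sSup_le_sSup fun _ ⟨hW, hiso⟩ =>
    ⟨hiso.isSimpleSubrep hd₁ hW, fun hiso₂ => h (hiso.repEquiv hW hiso₂)⟩

end Isotypic

theorem partial_trace_nonzero_implies_intertwining_general
    (π : G →* (V ≃ₗ[𝕜] V)) (K : Subgroup G) (g : G)
    (hg : ∀ x : G, g * x * g⁻¹ ∈ K ↔ x ∈ K)
    {Wd : Type*} [AddCommGroup Wd] [Module 𝕜 Wd]
    (d : K →* (Wd ≃ₗ[𝕜] Wd)) (hd : IsSimpleRep d)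
    (hfin : FiniteDimensional 𝕜 (IsotypicComponent π K d))
    (E : V →ₗ[𝕜] V)
    (hker : ∀ x ∈ sSup {W : Submodule 𝕜 V | IsSimpleSubrep π K W ∧ ¬ IsoToRep π K W d},
      E x = 0)
    (hrange : ∀ x : V, E x ∈ IsotypicComponent π K d)
    (hΘ : LinearMap.trace 𝕜 (IsotypicComponent π K d)
      (LinearMap.codRestrict (IsotypicComponent π K d)
        (E ∘ₗ (π g).toLinearMap ∘ₗ (IsotypicComponent π K d).subtype)
        (fun _ => hrange _)) ≠ 0) :
    (IsotypicComponent π K d).map (π g).toLinearMap = IsotypicComponent π K d ∧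
      RepEquiv (twistRep g hg d) d := by
  have hmap := map_isotypicComponent_le (π := π) hg d
  have hrep : RepEquiv (twistRep g hg d) d := by
    by_contra hnot
    have hle := hmap.trans (isotypicComponent_le_of_not_repEquiv (hd.twistRep hg) hnot)
    refine hΘ ?_
    convert map_zero (LinearMap.trace 𝕜 (IsotypicComponent π K d))
    exact LinearMap.ext fun u => Subtype.ext (hker _ (hle ⟨u, u.2, rfl⟩))
  refine ⟨Submodule.eq_of_le_of_finrank_le (hmap.trans hrep.isotypicComponent_le) ?_, hrep⟩
  rw [LinearEquiv.finrank_map_eq]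

/-- Suppose `g` normalizes `K`, `V` is semisimple as a `K`-module,
`(d, Wd)` is a simple representation of `K` whose isotypic component `V_d` is nonzero
and finite-dimensional, and `E` is the projection onto `V_d` along the sum of all the
other isotypic components (equivalently, along the sum of all simple `K`-submodules not
isomorphic to `(d, Wd)`).  Let `Θ_d(g)` be the trace on `V_d` of `u ↦ E (π g u)`.
If `Θ_d(g) ≠ 0`, then `π g (V_d) = V_d` and the `g`-twist `ᵍd` is `K`-isomorphic
to `d`. -/
theorem partial_trace_nonzero_implies_intertwining
    (π : G →* (V ≃ₗ[𝕜] V)) (K : Subgroup G) (g : G)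
    (hg : ∀ x : G, g * x * g⁻¹ ∈ K ↔ x ∈ K)
    (hsemisimple : sSup {W : Submodule 𝕜 V | IsSimpleSubrep π K W} = ⊤)
    {Wd : Type*} [AddCommGroup Wd] [Module 𝕜 Wd]
    (d : K →* (Wd ≃ₗ[𝕜] Wd)) (hd : IsSimpleRep d)
    (hne : IsotypicComponent π K d ≠ ⊥)
    (hfin : FiniteDimensional 𝕜 (IsotypicComponent π K d))
    (E : V →ₗ[𝕜] V)
    (hproj : ∀ x ∈ IsotypicComponent π K d, E x = x)
    (hker : ∀ x ∈ sSup {W : Submodule 𝕜 V | IsSimpleSubrep π K W ∧ ¬ IsoToRep π K W d},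
      E x = 0)
    (hrange : ∀ x : V, E x ∈ IsotypicComponent π K d)
    (hΘ : LinearMap.trace 𝕜 (IsotypicComponent π K d)
      (LinearMap.codRestrict (IsotypicComponent π K d)
        (E ∘ₗ (π g).toLinearMap ∘ₗ (IsotypicComponent π K d).subtype)
        (fun _ => hrange _)) ≠ 0) :
    (IsotypicComponent π K d).map (π g).toLinearMap = IsotypicComponent π K d ∧
      RepEquiv (twistRep g hg d) d :=
  partial_trace_nonzero_implies_intertwining_general π K g hg d hd hfin E hker hrange hΘ
end

section
/- Let K be a subgroup of G, N a normal subgroup of K, and g ∈ G an element with g·K·g⁻¹ = K and g·N·g⁻¹ = N. Suppose V is semisimple as a K-module, let (d, W) be a simple representation of K whose isotypic component V_d in V is nonzero and finite-dimensional, and let E : V → V be the 𝕜-linear projection onto V_d along the sum of all the other isotypic components of V. Suppose moreover that W, viewed as a representation of N by restriction, is an internal direct sum of finitely many simple N-submodules (d₁, W₁), …, (dₙ, Wₙ). Define Θ_d(g) to be the trace of the endomorphism of V_d given by u ↦ E(π(g) u). If Θ_d(g) ≠ 0, then for some i ∈ {1, …, n} the g-twist ᵍdᵢ (the representation of N on Wᵢ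 given by ᵍdᵢ(m) := dᵢ(g⁻¹·m·g)) is N-isomorphic to dᵢ. (This is the second assertion of the paper's Proposition on partial traces.) -/
variable {𝕜 : Type*} [Field 𝕜] {G : Type*} [Group G]
  {V : Type*} [AddCommGroup V] [Module 𝕜 V]

/-- `U ⊆ Wd` is invariant under the restriction to `N` of the representation `d`
of `K` (here `N` is a subgroup of `G` contained in `K`). -/
def IsNInvariant {G : Type*} [Group G] {K : Subgroup G} (N : Subgroup G)
    {Wd : Type*} [AddCommGroup Wd] [Module 𝕜 Wd] (d : K →* (Wd ≃ₗ[𝕜] Wd))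
    (U : Submodule 𝕜 Wd) : Prop :=
  ∀ (m : K), (m : G) ∈ N → ∀ x ∈ U, d m x ∈ U

/-- `U ⊆ Wd` is a simple `N`-submodule for the restriction of `d` to `N`. -/
def IsSimpleNInvariant {G : Type*} [Group G] {K : Subgroup G} (N : Subgroup G)
    {Wd : Type*} [AddCommGroup Wd] [Module 𝕜 Wd] (d : K →* (Wd ≃ₗ[𝕜] Wd))
    (U : Submodule 𝕜 Wd) : Prop :=
  IsNInvariant N d U ∧ U ≠ ⊥ ∧
    ∀ U₀ : Submodule 𝕜 Wd, U₀ ≤ U → IsNInvariant N d U₀ → U₀ = ⊥ ∨ U₀ = U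

/-!
Since `V = V_d ⊕ (other isotypic components)` with both summands `K`-stable, `E` commutes with
`π(K)`; hence `A = E ∘ π(g)`, restricted to `V_d`, intertwines the `N`-action twisted by
`m ↦ g⁻¹ m g` with the plain one. Every copy of `Wd` inside `V_d` is the sum of the images of the
`Wᵢ`, so `V_d` is a sum of `N`-simple submodules, each isomorphic to its twist only if the
corresponding `Wᵢ` is. If no `Wᵢ` is, decompose `V_d` as a direct sum of such submodules: by a
twisted Schur lemma every diagonal block of `A` vanishes, so its trace is `0`.
-/

open Module LinearMap Function DirectSum

theorem Finset.exists_supIndep_subset_sup_eq {α : Type*} [CompleteLattice α]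
    [IsModularLattice α] [DecidableEq α] (T : Finset α)
    (hT : ∀ t ∈ T, ∀ S ⊆ T, Disjoint t (S.sup _root_.id) ∨ t ≤ S.sup _root_.id) :
    ∃ S ⊆ T, S.SupIndep _root_.id ∧ S.sup _root_.id = T.sup _root_.id := by
  induction T using Finset.induction_on with
  | empty => exact ⟨∅, subset_rfl, supIndep_empty _, rfl⟩
  | insert t T _ ih =>
    obtain ⟨S, hST, hS, hsup⟩ := ih fun u hu S hS => hT u (mem_insert_of_mem hu) S
      (hS.trans (subset_insert t T))
    rw [sup_insert, ← hsup]
    rcases hT t (mem_insert_self t T) S (hST.trans (subset_insert t T)) with hdisj | hle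
    · exact ⟨insert t S, insert_subset_insert t hST, hS.insert hdisj, sup_insert⟩
    · exact ⟨S, hST.trans (subset_insert t T), hS, (sup_eq_right.mpr hle).symm⟩

theorem LinearMap.trace_eq_zero_of_mapsTo_iSup_ne {ι R M : Type*} [CommRing R] [AddCommGroup M]
    [Module R M] [Fintype ι] [DecidableEq ι] {N : ι → Submodule R M} (h : IsInternal N)
    [∀ i, Module.Finite R (N i)] [∀ i, Module.Free R (N i)] {f : Module.End R M}
    (hf : ∀ i, ∀ x ∈ N i, f x ∈ ⨆ (j) (_ : j ≠ i), N j) :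
    trace R M f = 0 := by
  let b := fun i => Module.Free.chooseBasis R (N i)
  rw [trace_eq_matrix_trace R (h.collectedBasis b), Matrix.trace]
  refine Finset.sum_eq_zero fun ⟨i, k⟩ _ => ?_
  have hoff : ⨆ (j) (_ : j ≠ i), N j ≤
      ker (Finsupp.lapply ⟨i, k⟩ ∘ₗ (h.collectedBasis b).repr.toLinearMap) :=
    iSup₂_le fun j hj x hx => h.collectedBasis_repr_of_mem_ne b hj hx
  rw [Matrix.diag_apply, toMatrix_apply, h.collectedBasis_coe]
  exact hoff (hf i _ (b i k).2)

theorem Module.End.commute_of_sup_eq_top {R M : Type*} [Ring R] [AddCommGroup M] [Module R M]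
    {D C : Submodule R M} (hDC : D ⊔ C = ⊤) {E T : Module.End R M} (hED : ∀ x ∈ D, E x = x)
    (hEC : ∀ x ∈ C, E x = 0) (hTD : ∀ x ∈ D, T x ∈ D) (hTC : ∀ x ∈ C, T x ∈ C) :
    Commute E T := by
  ext x
  obtain ⟨y, hy, z, hz, rfl⟩ := Submodule.mem_sup.mp (hDC ▸ Submodule.mem_top : x ∈ D ⊔ C)
  simp only [Module.End.mul_apply, map_add, hED _ (hTD y hy), hEC _ (hTC z hz), hED y hy,
    hEC z hz, map_zero]

section Invariant

variable {R X Γ : Type*} [Ring R] [AddCommGroup X] [Module R X] (ρ : Γ → Module.End R X)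

def IsInvariantSubmodule (S : Submodule R X) : Prop :=
  ∀ γ, ∀ x ∈ S, ρ γ x ∈ S

def IsSimpleInvariantSubmodule (S : Submodule R X) : Prop :=
  IsInvariantSubmodule ρ S ∧ S ≠ ⊥ ∧ ∀ U ≤ S, IsInvariantSubmodule ρ U → U = ⊥ ∨ U = S

/-- The restriction of `ρ` to `S` is isomorphic to its twist `ρ ∘ ψ`; for `ψ` conjugation by `g`
this is `ᵍdᵢ ≅ dᵢ`. -/
def IsTwistIsomorphic (ψ : Γ → Γ) (S : Submodule R X) : Prop :=
  ∃ e : S ≃ₗ[R] S, ∀ (m : Γ) (x : S) (hx : ρ (ψ m) x ∈ S), (e ⟨ρ (ψ m) x, hx⟩ : X) = ρ m (e x)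

variable {ρ}

theorem IsInvariantSubmodule.sSup {s : Set (Submodule R X)}
    (hs : ∀ S ∈ s, IsInvariantSubmodule ρ S) : IsInvariantSubmodule ρ (sSup s) := fun γ =>
  sSup_le fun S hS =>
    (show S ≤ S.comap (ρ γ) from hs S hS γ).trans (Submodule.comap_mono (le_sSup hS))

theorem IsInvariantSubmodule.iSup {ι : Sort*} {S : ι → Submodule R X}
    (hS : ∀ i, IsInvariantSubmodule ρ (S i)) : IsInvariantSubmodule ρ (⨆ i, S i) :=
  IsInvariantSubmodule.sSup (Set.forall_mem_range.mpr hS)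

theorem IsInvariantSubmodule.inf {S T : Submodule R X} (hS : IsInvariantSubmodule ρ S)
    (hT : IsInvariantSubmodule ρ T) : IsInvariantSubmodule ρ (S ⊓ T) :=
  fun γ x hx => ⟨hS γ x hx.1, hT γ x hx.2⟩

theorem IsInvariantSubmodule.projection_apply_comm {S C : Submodule R X}
    (hS : IsInvariantSubmodule ρ S) (hC : IsInvariantSubmodule ρ C) (hSC : IsCompl S C)
    (γ : Γ) (x : X) :
    S.projection C hSC (ρ γ x) = ρ γ (S.projection C hSC x) := by
  have hcomm : Commute (S.projection C hSC) (ρ γ) :=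
    (Submodule.isIdempotentElem_projection hSC).commute_iff.mpr
      ⟨by rw [Submodule.range_projection]; exact hS γ,
        by rw [Submodule.ker_projection]; exact hC γ⟩
  exact LinearMap.congr_fun hcomm.eq x

theorem IsSimpleInvariantSubmodule.disjoint_or_le {S T : Submodule R X}
    (hS : IsSimpleInvariantSubmodule ρ S) (hT : IsInvariantSubmodule ρ T) :
    Disjoint S T ∨ S ≤ T :=
  (hS.2.2 _ inf_le_left (hS.1.inf hT)).imp disjoint_iff.mpr inf_eq_left.mp

variable {ψ : Γ → Γ} {S : Submodule R X}

theorem IsSimpleInvariantSubmodule.eq_zero_of_twisted_intertwining (hψ : Surjective ψ)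
    (hS : IsSimpleInvariantSubmodule ρ S) (hS' : ¬ IsTwistIsomorphic ρ ψ S)
    {φ : Module.End R X} (hφ : ∀ m x, φ (ρ (ψ m) x) = ρ m (φ x)) (hφS : ∀ x ∈ S, φ x ∈ S) :
    ∀ x ∈ S, φ x = 0 := by
  have himage : IsInvariantSubmodule ρ (S.map φ) := by
    rintro γ _ ⟨x, hx, rfl⟩
    exact ⟨ρ (ψ γ) x, hS.1 _ x hx, hφ γ x⟩
  have hker : IsInvariantSubmodule ρ (ker φ ⊓ S) := by
    intro γ x hx
    obtain ⟨m, rfl⟩ := hψ γ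
    refine ⟨?_, hS.1 _ x hx.2⟩
    show φ (ρ (ψ m) x) = 0
    rw [hφ, mem_ker.mp hx.1, map_zero]
  rcases hS.2.2 _ (Submodule.map_le_iff_le_comap.mpr hφS) himage with himage_bot | himage_top
  · intro x hx
    simpa [himage_bot] using Submodule.mem_map_of_mem (f := φ) hx
  rcases hS.2.2 _ inf_le_right hker with hker_bot | hker_top
  · refine absurd ⟨LinearEquiv.ofBijective (φ.restrict hφS) ⟨?_, ?_⟩, fun m x hx => hφ m x⟩ hS'
    · refine ker_eq_bot.mp (eq_bot_iff.mpr fun x hx => ?_)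
      have hx0 : (x : X) ∈ ker φ ⊓ S := ⟨congrArg Subtype.val hx, x.2⟩
      rw [hker_bot, Submodule.mem_bot] at hx0
      exact (Submodule.mem_bot R).mpr (Subtype.ext hx0)
    · intro y
      obtain ⟨x, hx, hxy⟩ : (y : X) ∈ S.map φ := by rw [himage_top]; exact y.2
      exact ⟨⟨x, hx⟩, Subtype.ext hxy⟩
  · intro x hx
    rw [← hker_top] at hx
    exact hx.1

theorem IsSimpleInvariantSubmodule.mapsTo_of_isCompl (hψ : Surjective ψ)
    (hS : IsSimpleInvariantSubmodule ρ S) (hS' : ¬ IsTwistIsomorphic ρ ψ S) {C : Submodule R X}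
    (hC : IsInvariantSubmodule ρ C) (hSC : IsCompl S C)
    {A : Module.End R X} (hA : ∀ m x, A (ρ (ψ m) x) = ρ m (A x)) :
    ∀ x ∈ S, A x ∈ C := by
  let P := S.projection C hSC
  have hPA : ∀ x ∈ S, P (A x) = 0 := by
    refine hS.eq_zero_of_twisted_intertwining hψ hS' (φ := P ∘ₗ A) (fun m x => ?_)
      fun x _ => Submodule.projection_apply_mem hSC _
    rw [LinearMap.comp_apply, LinearMap.comp_apply, hA, hS.1.projection_apply_comm hC hSC]
  exact fun x hx => (Submodule.projection_apply_eq_zero_iff hSC).mp (hPA x hx)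

end Invariant

section Transport

variable {R X Y Γ : Type*} [Ring R] [AddCommGroup X] [Module R X] [AddCommGroup Y] [Module R Y]
  {ρ : Γ → Module.End R X} {σ : Γ → Module.End R Y} {f : X →ₗ[R] Y} {U : Submodule R X}

theorem IsSimpleInvariantSubmodule.map (hf : Injective f) (hfσ : ∀ γ x, f (ρ γ x) = σ γ (f x))
    (hU : IsSimpleInvariantSubmodule ρ U) : IsSimpleInvariantSubmodule σ (U.map f) := by
  refine ⟨?_, ?_, fun U' hU' hU'inv => ?_⟩
  · rintro γ _ ⟨x, hx, rfl⟩
    exact ⟨ρ γ x, hU.1 γ x hx, hfσ γ x⟩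
  · rw [Ne, ← Submodule.map_bot f, (Submodule.map_injective_of_injective hf).eq_iff]
    exact hU.2.1
  have hcomap_inv : IsInvariantSubmodule ρ (U'.comap f) := fun γ x hx => by
    rw [Submodule.mem_comap, hfσ]
    exact hU'inv γ _ hx
  have hU'_eq : (U'.comap f).map f = U' :=
    Submodule.map_comap_eq_of_le (hU'.trans LinearMap.map_le_range)
  rw [← hU'_eq]
  refine (hU.2.2 _ ((Submodule.comap_mono hU').trans
    (Submodule.comap_map_eq_of_injective hf U).le) hcomap_inv).imp (fun h => ?_) (fun h => ?_) <;>
  rw [h]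
  exact Submodule.map_bot f

theorem IsTwistIsomorphic.of_map {ψ : Γ → Γ} (hf : Injective f)
    (hfσ : ∀ γ x, f (ρ γ x) = σ γ (f x)) (h : IsTwistIsomorphic σ ψ (U.map f)) :
    IsTwistIsomorphic ρ ψ U := by
  obtain ⟨e, he⟩ := h
  let c := Submodule.equivMapOfInjective f hf U
  have hc_symm : ∀ y, f (c.symm y) = y := fun y => by
    rw [← Submodule.coe_equivMapOfInjective_apply f hf, LinearEquiv.apply_symm_apply]
  refine ⟨c.trans (e.trans c.symm), fun m x hx => hf ?_⟩
  have hcx : c ⟨ρ (ψ m) x, hx⟩ = ⟨σ (ψ m) (c x), by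
      show σ (ψ m) (f x) ∈ _
      rw [← hfσ]; exact ⟨_, hx, rfl⟩⟩ :=
    Subtype.ext (hfσ (ψ m) x)
  simp only [LinearEquiv.trans_apply, hfσ, hc_symm, hcx, he]

end Transport

section Trace

variable {k X Γ : Type*} [Field k] [AddCommGroup X] [Module k X] [FiniteDimensional k X]
  {ρ : Γ → Module.End k X} {ψ : Γ → Γ}

theorem trace_eq_zero_of_twisted_intertwining (hψ : Surjective ψ)
    (hspan : sSup {S | IsSimpleInvariantSubmodule ρ S ∧ ¬ IsTwistIsomorphic ρ ψ S} = ⊤)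
    {A : Module.End k X} (hA : ∀ m x, A (ρ (ψ m) x) = ρ m (A x)) :
    trace k X A = 0 := by
  classical
  obtain ⟨T, hT, hTsup⟩ := CompleteLattice.WellFoundedGT.isSupFiniteCompact (Submodule k X)
    {S | IsSimpleInvariantSubmodule ρ S ∧ ¬ IsTwistIsomorphic ρ ψ S}
  obtain ⟨S, hST, hSind, hSsup⟩ := T.exists_supIndep_subset_sup_eq fun t ht S hS =>
    (hT ht).1.disjoint_or_le <| by
      rw [Finset.sup_id_eq_sSup]
      exact .sSup fun u hu => (hT (hS hu)).1.1
  have hsup : ⨆ i : S, (i : Submodule k X) = ⊤ := by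
    have hSsup_top : S.sup _root_.id = ⊤ := by rw [hSsup, ← hTsup, hspan]
    rwa [Finset.sup_eq_iSup, iSup_subtype'] at hSsup_top
  have hint : IsInternal fun i : S => (i : Submodule k X) :=
    isInternal_submodule_of_iSupIndep_of_iSup_eq_top hSind.independent hsup
  refine trace_eq_zero_of_mapsTo_iSup_ne hint fun i => ?_
  obtain ⟨hsimple, htwist⟩ := hT (hST i.2)
  refine hsimple.mapsTo_of_isCompl hψ htwist (.iSup fun j => .iSup fun _ => (hT (hST j.2)).1.1)
    ⟨hint.submodule_iSupIndep i, codisjoint_iff.mpr ?_⟩ hA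
  rw [← iSup_split_single, hsup]

end Trace

section Application

variable (π : G →* (V ≃ₗ[𝕜] V))

theorem isSubrep_iff_isInvariantSubmodule (K : Subgroup G) (W : Submodule 𝕜 V) :
    IsSubrep π K W ↔ IsInvariantSubmodule (fun c : K => (π c).toLinearMap) W :=
  ⟨fun h c => h c c.2, fun h c hc => h ⟨c, hc⟩⟩

variable {π}

theorem IsSubrep.sSup {K : Subgroup G} {s : Set (Submodule 𝕜 V)} (hs : ∀ W ∈ s, IsSubrep π K W) :
    IsSubrep π K (sSup s) :=
  (isSubrep_iff_isInvariantSubmodule π K _).mpr <|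
    .sSup fun W hW => (isSubrep_iff_isInvariantSubmodule π K W).mp (hs W hW)

theorem IsSubrep.mono {K N : Subgroup G} (hNK : N ≤ K) {W : Submodule 𝕜 V} (hW : IsSubrep π K W) :
    IsSubrep π N W :=
  fun c hc => hW c (hNK hc)

def IsSubrep.action {N : Subgroup G} {D : Submodule 𝕜 V} (hD : IsSubrep π N D) :
    N → Module.End 𝕜 D :=
  fun m => (π m).toLinearMap.restrict (hD m m.2)

def restrictAction {K N : Subgroup G} (hNK : N ≤ K) {Wd : Type*} [AddCommGroup Wd] [Module 𝕜 Wd]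
    (d : K →* (Wd ≃ₗ[𝕜] Wd)) : N → Module.End 𝕜 Wd :=
  fun m => (d (Subgroup.inclusion hNK m)).toLinearMap

theorem isSimpleNInvariant_iff {K N : Subgroup G} (hNK : N ≤ K) {Wd : Type*} [AddCommGroup Wd]
    [Module 𝕜 Wd] (d : K →* (Wd ≃ₗ[𝕜] Wd)) (U : Submodule 𝕜 Wd) :
    IsSimpleNInvariant N d U ↔ IsSimpleInvariantSubmodule (restrictAction hNK d) U := by
  have hinv : ∀ U₀, IsNInvariant N d U₀ ↔ IsInvariantSubmodule (restrictAction hNK d) U₀ :=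
    fun U₀ => ⟨fun h m => h _ m.2, fun h m hm => h ⟨m, hm⟩⟩
  simp only [IsSimpleNInvariant, IsSimpleInvariantSubmodule, hinv]

theorem conjElem_surjective {N : Subgroup G} {g : G} (hgN : ∀ x : G, g * x * g⁻¹ ∈ N ↔ x ∈ N) :
    Surjective (conjElem N g hgN) := fun m =>
  ⟨⟨g * m * g⁻¹, (hgN _).mpr m.2⟩, Subtype.ext (by simp [conjElem, mul_assoc])⟩

theorem IsoToRep.exists_embedding {K : Subgroup G} {W : Submodule 𝕜 V} (hW : IsSubrep π K W)
    {Wd : Type*} [AddCommGroup Wd] [Module 𝕜 Wd] {d : K →* (Wd ≃ₗ[𝕜] Wd)}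
    (h : IsoToRep π K W d) :
    ∃ f : Wd →ₗ[𝕜] V, Injective f ∧ range f = W ∧ ∀ (c : K) w, f (d c w) = π c (f w) := by
  obtain ⟨e, he⟩ := h
  refine ⟨W.subtype ∘ₗ e.symm.toLinearMap, W.injective_subtype.comp e.symm.injective,
    by rw [range_comp, LinearEquiv.range, Submodule.map_subtype_top], fun c w => ?_⟩
  have hrep := he c (e.symm w) (hW c c.2 _ (e.symm w).2)
  rw [e.apply_symm_apply] at hrep
  rw [LinearMap.comp_apply, LinearEquiv.coe_coe, ← hrep, e.symm_apply_apply]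
  rfl

theorem isotypicComponent_sup_eq_top {K : Subgroup G}
    (hsemisimple : sSup {W : Submodule 𝕜 V | IsSimpleSubrep π K W} = ⊤)
    {Wd : Type*} [AddCommGroup Wd] [Module 𝕜 Wd] (d : K →* (Wd ≃ₗ[𝕜] Wd)) :
    IsotypicComponent π K d ⊔ sSup {W | IsSimpleSubrep π K W ∧ ¬ IsoToRep π K W d} = ⊤ := by
  refine eq_top_iff.mpr (hsemisimple ▸ sSup_le fun W hW => ?_)
  by_cases hiso : IsoToRep π K W d
  · exact le_sup_of_le_left (le_sSup ⟨hW.1, hiso⟩)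
  · exact le_sup_of_le_right (le_sSup ⟨hW, hiso⟩)

/-- Each copy of `Wd` in the isotypic component is the sum of the images of the `Ws i`. -/
theorem sSup_isSimple_not_isTwistIsomorphic_eq_top {K N : Subgroup G} (hNK : N ≤ K)
    {Wd : Type*} [AddCommGroup Wd] [Module 𝕜 Wd] {d : K →* (Wd ≃ₗ[𝕜] Wd)}
    (hD : IsSubrep π N (IsotypicComponent π K d)) {ψ : N → N}
    {n : ℕ} {Ws : Fin n → Submodule 𝕜 Wd} (hWs : ∀ i, IsSimpleNInvariant N d (Ws i))
    (hsup : ⨆ i, Ws i = ⊤) (htw : ∀ i, ¬ IsTwistIsomorphic (restrictAction hNK d) ψ (Ws i)) :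
    sSup {S | IsSimpleInvariantSubmodule hD.action S ∧ ¬ IsTwistIsomorphic hD.action ψ S} = ⊤ := by
  rw [eq_top_iff, ← Submodule.map_le_map_iff_of_injective (Submodule.injective_subtype _),
    Submodule.map_subtype_top]
  refine sSup_le fun W hWmem => ?_
  obtain ⟨f, hf_inj, hf_range, hf⟩ := hWmem.2.exists_embedding hWmem.1
  have hfD : ∀ w, f w ∈ IsotypicComponent π K d :=
    fun w => le_sSup hWmem (hf_range ▸ mem_range_self f w)
  let f₀ := f.codRestrict _ hfD
  have hf₀_inj : Injective f₀ := fun a b h => hf_inj (congrArg Subtype.val h)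
  have hf₀ : ∀ m w, f₀ (restrictAction hNK d m w) = hD.action m (f₀ w) :=
    fun m w => Subtype.ext (hf _ w)
  rw [← hf_range, range_eq_map, ← hsup, Submodule.map_iSup]
  refine iSup_le fun i => ?_
  have hmem : (Ws i).map f₀ ∈ {S | IsSimpleInvariantSubmodule hD.action S ∧
      ¬ IsTwistIsomorphic hD.action ψ S} :=
    ⟨((isSimpleNInvariant_iff hNK d _).mp (hWs i)).map hf₀_inj hf₀,
      fun h => htw i (h.of_map hf₀_inj hf₀)⟩
  rw [← subtype_comp_codRestrict (f := f) _ hfD, Submodule.map_comp]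
  exact Submodule.map_mono (le_sSup hmem)

end Application

theorem partial_trace_nonzero_implies_constituent_intertwining_general
    (π : G →* (V ≃ₗ[𝕜] V)) (K N : Subgroup G) (g : G)
    (hNK : N ≤ K)
    (hgN : ∀ x : G, g * x * g⁻¹ ∈ N ↔ x ∈ N)
    (hsemisimple : sSup {W : Submodule 𝕜 V | IsSimpleSubrep π K W} = ⊤)
    {Wd : Type*} [AddCommGroup Wd] [Module 𝕜 Wd]
    (d : K →* (Wd ≃ₗ[𝕜] Wd))
    (hfin : FiniteDimensional 𝕜 (IsotypicComponent π K d))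
    (E : V →ₗ[𝕜] V)
    (hproj : ∀ x ∈ IsotypicComponent π K d, E x = x)
    (hker : ∀ x ∈ sSup {W : Submodule 𝕜 V | IsSimpleSubrep π K W ∧ ¬ IsoToRep π K W d},
      E x = 0)
    (hrange : ∀ x : V, E x ∈ IsotypicComponent π K d)
    (n : ℕ) (Ws : Fin n → Submodule 𝕜 Wd)
    (hWs : ∀ i, IsSimpleNInvariant N d (Ws i))
    (hsup : (⨆ i, Ws i) = ⊤)
    (hΘ : LinearMap.trace 𝕜 (IsotypicComponent π K d)
      (LinearMap.codRestrict (IsotypicComponent π K d)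
        (E ∘ₗ (π g).toLinearMap ∘ₗ (IsotypicComponent π K d).subtype)
        (fun _ => hrange _)) ≠ 0) :
    ∃ (i : Fin n) (e : Ws i ≃ₗ[𝕜] Ws i),
      ∀ (m m' : K), (m : G) ∈ N → (m' : G) = g⁻¹ * (m : G) * g →
        ∀ (x : Ws i) (hx : d m' (x : Wd) ∈ Ws i),
          (e ⟨d m' (x : Wd), hx⟩ : Wd) = d m ((e x : Wd)) := by
  by_contra hcon
  have htw : ∀ i, ¬ IsTwistIsomorphic (restrictAction hNK d) (conjElem N g hgN) (Ws i) := by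
    rintro i ⟨e, he⟩
    refine hcon ⟨i, e, fun m m' hm hm' x hx => ?_⟩
    obtain rfl : m' = Subgroup.inclusion hNK (conjElem N g hgN ⟨m, hm⟩) := Subtype.ext hm'
    exact he ⟨m, hm⟩ x hx
  have hDK : IsSubrep π K (IsotypicComponent π K d) := IsSubrep.sSup fun _ hW => hW.1
  have hEcomm : ∀ c ∈ K, Commute E (π c).toLinearMap := fun c hc =>
    Module.End.commute_of_sup_eq_top (isotypicComponent_sup_eq_top hsemisimple d) hproj hker
      (hDK c hc) (IsSubrep.sSup (fun _ hW => hW.1.1) c hc)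
  have hDN := hDK.mono hNK
  refine hΘ (trace_eq_zero_of_twisted_intertwining (conjElem_surjective hgN)
    (sSup_isSimple_not_isTwistIsomorphic_eq_top hNK hDN hWs hsup htw) fun m x => Subtype.ext ?_)
  have hconj : π g * π (g⁻¹ * m * g) = π m * π g := by rw [← map_mul, ← map_mul]; group
  show E (π g (π (g⁻¹ * m * g) x)) = π m (E (π g x))
  rw [← LinearEquiv.mul_apply, hconj, LinearEquiv.mul_apply]
  exact LinearMap.congr_fun (hEcomm m (hNK m.2)) _

/-- Let `N ⊴ K` be subgroups of `G`, and `g ∈ G` normalizing both `K`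
and `N`.  Suppose `V` is semisimple as a `K`-module, `(d, Wd)` is a simple representation
of `K` whose isotypic component `V_d` is nonzero and finite-dimensional, `E` is the
projection onto `V_d` along the sum of all the other isotypic components, and `Wd`, as a
representation of `N` by restriction, is the internal direct sum of finitely many simple
`N`-submodules `W₁, …, Wₙ`.  If the partial trace `Θ_d(g)` of `u ↦ E (π g u)` on `V_d` is
nonzero, then for some `i` the `g`-twist `ᵍdᵢ` (given by `ᵍdᵢ(m) = dᵢ(g⁻¹ m g)`) is
`N`-isomorphic to `dᵢ`. -/
theorem partial_trace_nonzero_implies_constituent_intertwining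
    (π : G →* (V ≃ₗ[𝕜] V)) (K N : Subgroup G) (g : G)
    (hNK : N ≤ K)
    (hnormal : ∀ c ∈ K, ∀ m ∈ N, c * m * c⁻¹ ∈ N)
    (hgK : ∀ x : G, g * x * g⁻¹ ∈ K ↔ x ∈ K)
    (hgN : ∀ x : G, g * x * g⁻¹ ∈ N ↔ x ∈ N)
    (hsemisimple : sSup {W : Submodule 𝕜 V | IsSimpleSubrep π K W} = ⊤)
    {Wd : Type*} [AddCommGroup Wd] [Module 𝕜 Wd]
    (d : K →* (Wd ≃ₗ[𝕜] Wd)) (hd : IsSimpleRep d)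
    (hne : IsotypicComponent π K d ≠ ⊥)
    (hfin : FiniteDimensional 𝕜 (IsotypicComponent π K d))
    (E : V →ₗ[𝕜] V)
    (hproj : ∀ x ∈ IsotypicComponent π K d, E x = x)
    (hker : ∀ x ∈ sSup {W : Submodule 𝕜 V | IsSimpleSubrep π K W ∧ ¬ IsoToRep π K W d},
      E x = 0)
    (hrange : ∀ x : V, E x ∈ IsotypicComponent π K d)
    (n : ℕ) (Ws : Fin n → Submodule 𝕜 Wd)
    (hWs : ∀ i, IsSimpleNInvariant N d (Ws i))
    (hindep : iSupIndep Ws)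
    (hsup : (⨆ i, Ws i) = ⊤)
    (hΘ : LinearMap.trace 𝕜 (IsotypicComponent π K d)
      (LinearMap.codRestrict (IsotypicComponent π K d)
        (E ∘ₗ (π g).toLinearMap ∘ₗ (IsotypicComponent π K d).subtype)
        (fun _ => hrange _)) ≠ 0) :
    ∃ (i : Fin n) (e : Ws i ≃ₗ[𝕜] Ws i),
      ∀ (m m' : K), (m : G) ∈ N → (m' : G) = g⁻¹ * (m : G) * g →
        ∀ (x : Ws i) (hx : d m' (x : Wd) ∈ Ws i),
          (e ⟨d m' (x : Wd), hx⟩ : Wd) = d m ((e x : Wd)) :=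
  partial_trace_nonzero_implies_constituent_intertwining_general π K N g hNK hgN hsemisimple d hfin
    E hproj hker hrange n Ws hWs hsup hΘ
end
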